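/- arXiv:2101.07536 — 5 statements merged into one kernel-verified Lean document; each statement's English description precedes it below -/
import Mathlib

section
/- Let $H_d^+ : (Q \times Q) \times (Q^* \times Q^*) \to \mathbb{R}$ be a smooth function of arguments $(\varphi_{[a]b}, \varphi_{a[b]}, \pi^1_{[a]b+1}, \pi^0_{a+1[b]})$ on a real vector space $Q$ with dual $Q^*$. Suppose the discrete forward Hamilton's equations hold at the level of differentials: $\Delta t\, d\pi^1_{[a]b} = d(D_1 H_d^+)$, $\Delta x\, d\pi^0_{a[b]} = d(D_2 H_d^+)$, $\Delta t\, d\varphi_{[a]b+1} = d(D_3 H_d^+)$, $\Delta x\, d\varphi_{a+1[b]} = d(D_4 H_d^+)$ when evaluated on a pair of vector fields $V, W$. Then the discrete multisymplectic form formula holds on $(V,W)$: $\Delta t\, d\varphi_{[a]b+1} \wedge d\pi^1_{[a]b+1} - \Delta t\, d\varphi_{[a]b} \wedge d\pi^1_{[a]b} + \Delta x\, d\varphi_{a+1[b]} \wedge d\pi^0_{a+1[b]} - \Delta x\, d\varphi_{a[b]} \wedge d\pi^0_{a[b]} = 0$. -/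
open RealInnerProductSpace

private lemma fderiv_apply_const' {E F G : Type*} [NormedAddCommGroup E] [NormedSpace ℝ E]
    [NormedAddCommGroup F] [NormedSpace ℝ F] [NormedAddCommGroup G] [NormedSpace ℝ G]
    (f : E → F →L[ℝ] G) {x : E} (hf : DifferentiableAt ℝ f x) (w : F) (v : E) :
    fderiv ℝ (fun y => f y w) x v = fderiv ℝ f x v w := by
  rw [fderiv_clm_apply hf (differentiableAt_const w)]
  simp

/-- Abstract `d²F = 0` argument: if the differential of `F` is expressed as a sum of
pairings `⟪G i, dφ i⟫`, then the antisymmetrized derivative of the coefficients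
vanishes, by symmetry of second derivatives. -/
private lemma key_aux {Q : Type*} [NormedAddCommGroup Q] [InnerProductSpace ℝ Q]
    (F : ℝ × ℝ → ℝ) (hF : ContDiff ℝ 2 F)
    (G φ : Fin 4 → ℝ × ℝ → Q)
    (x V W : ℝ × ℝ)
    (hG : ∀ i, DifferentiableAt ℝ (G i) x)
    (hφ : ∀ i, ContDiff ℝ 2 (φ i))
    (hstar : ∀ y w, fderiv ℝ F y w = ∑ i, ⟪G i y, fderiv ℝ (φ i) y w⟫) :
    ∑ i, (⟪fderiv ℝ (G i) x V, fderiv ℝ (φ i) x W⟫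
        - ⟪fderiv ℝ (G i) x W, fderiv ℝ (φ i) x V⟫) = 0 := by
  have hφ1 : ∀ i, ContDiff ℝ 1 (fderiv ℝ (φ i)) := fun i => (hφ i).fderiv_right (by norm_num)
  have hφw : ∀ (i) (w : ℝ × ℝ), DifferentiableAt ℝ (fun y => fderiv ℝ (φ i) y w) x :=
    fun i w => (((hφ1 i).differentiable one_ne_zero).clm_apply (differentiable_const w)) x
  have hFd1 : ContDiff ℝ 1 (fderiv ℝ F) := hF.fderiv_right (by norm_num)
  have Ssum : ∀ v w : ℝ × ℝ, fderiv ℝ (fderiv ℝ F) x v w =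
      ∑ i, (⟪G i x, fderiv ℝ (fderiv ℝ (φ i)) x v w⟫
          + ⟪fderiv ℝ (G i) x v, fderiv ℝ (φ i) x w⟫) := by
    intro v w
    rw [← fderiv_apply_const' _ ((hFd1.differentiable one_ne_zero).differentiableAt) w v]
    have hfun : (fun y => fderiv ℝ F y w) = fun y => ∑ i, ⟪G i y, fderiv ℝ (φ i) y w⟫ :=
      funext fun y => hstar y w
    rw [hfun, fderiv_fun_sum (fun i _ => ((hG i).inner ℝ (hφw i w)))]
    rw [ContinuousLinearMap.sum_apply]
    refine Finset.sum_congr rfl fun i _ => ?_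
    rw [fderiv_inner_apply (𝕜 := ℝ) (hG i) (hφw i w)]
    rw [fderiv_apply_const' _ (((hφ1 i).differentiable one_ne_zero).differentiableAt) w v]
  have hsym : fderiv ℝ (fderiv ℝ F) x V W = fderiv ℝ (fderiv ℝ F) x W V :=
    (hF.contDiffAt.isSymmSndFDerivAt (by simp)) V W
  have hφsym : ∀ i, fderiv ℝ (fderiv ℝ (φ i)) x V W = fderiv ℝ (fderiv ℝ (φ i)) x W V :=
    fun i => ((hφ i).contDiffAt.isSymmSndFDerivAt (by simp)) V W
  calc ∑ i, (⟪fderiv ℝ (G i) x V, fderiv ℝ (φ i) x W⟫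
        - ⟪fderiv ℝ (G i) x W, fderiv ℝ (φ i) x V⟫)
      = ∑ i, ((⟪G i x, fderiv ℝ (fderiv ℝ (φ i)) x V W⟫
              + ⟪fderiv ℝ (G i) x V, fderiv ℝ (φ i) x W⟫)
            - (⟪G i x, fderiv ℝ (fderiv ℝ (φ i)) x W V⟫
              + ⟪fderiv ℝ (G i) x W, fderiv ℝ (φ i) x V⟫)) := by
        refine Finset.sum_congr rfl fun i _ => ?_
        rw [hφsym i]; ring
    _ = (∑ i, (⟪G i x, fderiv ℝ (fderiv ℝ (φ i)) x V W⟫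
              + ⟪fderiv ℝ (G i) x V, fderiv ℝ (φ i) x W⟫))
      - (∑ i, (⟪G i x, fderiv ℝ (fderiv ℝ (φ i)) x W V⟫
              + ⟪fderiv ℝ (G i) x W, fderiv ℝ (φ i) x V⟫)) := Finset.sum_sub_distrib _ _
    _ = 0 := by rw [← Ssum V W, ← Ssum W V, hsym, sub_self]

/-- Discrete multisymplecticity for the one-quadrature-point Hamiltonian variational
integrator: if the discrete forward Hamilton's equations hold at the level of
differentials along a two-parameter variation, evaluated on the directions `V` and `W`,
then the discrete multisymplectic form formula holds on `(V, W)`.  The dual space `Q^*`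
is identified with `Q` via the inner product, so that partial derivatives of `H_d^+`
are gradients and the duality pairing is the inner product. -/
theorem discrete_multisymplectic_form_formula
    {Q : Type*} [NormedAddCommGroup Q] [InnerProductSpace ℝ Q] [FiniteDimensional ℝ Q]
    (Δt Δx : ℝ) (hΔt : 0 < Δt) (hΔx : 0 < Δx)
    (H : Q × Q × Q × Q → ℝ) (hH : ContDiff ℝ (⊤ : ℕ∞) H)
    -- the boundary data as functions of the two variation parameters `(u,v) ∈ ℝ × ℝ`:
    (qA1 qA0 qB1 qB0 pA1 pA0 pB1 pB0 : ℝ × ℝ → Q)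
    (hqA1 : ContDiff ℝ (⊤ : ℕ∞) qA1) (hqA0 : ContDiff ℝ (⊤ : ℕ∞) qA0)
    (hqB1 : ContDiff ℝ (⊤ : ℕ∞) qB1) (hqB0 : ContDiff ℝ (⊤ : ℕ∞) qB0)
    (hpA1 : ContDiff ℝ (⊤ : ℕ∞) pA1) (hpA0 : ContDiff ℝ (⊤ : ℕ∞) pA0)
    (hpB1 : ContDiff ℝ (⊤ : ℕ∞) pB1) (hpB0 : ContDiff ℝ (⊤ : ℕ∞) pB0)
    (x V W : ℝ × ℝ)
    -- the discrete forward Hamilton's equations at the level of differentials,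
    -- evaluated on the pair of vector fields (directions) `V`, `W`:
    (heq : ∀ v, v = V ∨ v = W →
      (Δt • fderiv ℝ pA1 x v =
        fderiv ℝ (fun y => gradient (fun q => H (q, qA0 y, pB1 y, pB0 y)) (qA1 y)) x v) ∧
      (Δx • fderiv ℝ pA0 x v =
        fderiv ℝ (fun y => gradient (fun q => H (qA1 y, q, pB1 y, pB0 y)) (qA0 y)) x v) ∧
      (Δt • fderiv ℝ qB1 x v =
        fderiv ℝ (fun y => gradient (fun p => H (qA1 y, qA0 y, p, pB0 y)) (pB1 y)) x v) ∧
      (Δx • fderiv ℝ qB0 x v =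
        fderiv ℝ (fun y => gradient (fun p => H (qA1 y, qA0 y, pB1 y, p)) (pB0 y)) x v)) :
    Δt * (⟪fderiv ℝ pB1 x W, fderiv ℝ qB1 x V⟫ - ⟪fderiv ℝ pB1 x V, fderiv ℝ qB1 x W⟫)
      - Δt * (⟪fderiv ℝ pA1 x W, fderiv ℝ qA1 x V⟫ - ⟪fderiv ℝ pA1 x V, fderiv ℝ qA1 x W⟫)
      + Δx * (⟪fderiv ℝ pB0 x W, fderiv ℝ qB0 x V⟫ - ⟪fderiv ℝ pB0 x V, fderiv ℝ qB0 x W⟫)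
      - Δx * (⟪fderiv ℝ pA0 x W, fderiv ℝ qA0 x V⟫ - ⟪fderiv ℝ pA0 x V, fderiv ℝ qA0 x W⟫)
      = 0 := by
  classical
  -- the four coordinate injections `Q →L[ℝ] Q × Q × Q × Q`
  set L1 : Q →L[ℝ] Q × Q × Q × Q :=
    (ContinuousLinearMap.id ℝ Q).prod 0 with hL1
  set L2 : Q →L[ℝ] Q × Q × Q × Q :=
    (0 : Q →L[ℝ] Q).prod ((ContinuousLinearMap.id ℝ Q).prod 0) with hL2
  set L3 : Q →L[ℝ] Q × Q × Q × Q :=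
    (0 : Q →L[ℝ] Q).prod ((0 : Q →L[ℝ] Q).prod ((ContinuousLinearMap.id ℝ Q).prod 0)) with hL3
  set L4 : Q →L[ℝ] Q × Q × Q × Q :=
    (0 : Q →L[ℝ] Q).prod ((0 : Q →L[ℝ] Q).prod ((0 : Q →L[ℝ] Q).prod
      (ContinuousLinearMap.id ℝ Q))) with hL4
  -- identify the gradients with duals of partial derivatives of `H`
  have hg1 : ∀ y, gradient (fun q => H (q, qA0 y, pB1 y, pB0 y)) (qA1 y) =
      (InnerProductSpace.toDual ℝ Q).symm
        ((fderiv ℝ H (qA1 y, qA0 y, pB1 y, pB0 y)).comp L1) := by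
    intro y
    have hm : HasFDerivAt (fun q : Q => (q, qA0 y, pB1 y, pB0 y)) L1 (qA1 y) :=
      (hasFDerivAt_id _).prodMk (hasFDerivAt_const _ _)
    exact (hasFDerivAt_iff_hasGradientAt.mp
      (((hH.differentiable (by simp) _).hasFDerivAt).comp _ hm)).gradient
  have hg2 : ∀ y, gradient (fun q => H (qA1 y, q, pB1 y, pB0 y)) (qA0 y) =
      (InnerProductSpace.toDual ℝ Q).symm
        ((fderiv ℝ H (qA1 y, qA0 y, pB1 y, pB0 y)).comp L2) := by
    intro y
    have hm : HasFDerivAt (fun q : Q => (qA1 y, q, pB1 y, pB0 y)) L2 (qA0 y) :=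
      (hasFDerivAt_const _ _).prodMk ((hasFDerivAt_id _).prodMk (hasFDerivAt_const _ _))
    exact (hasFDerivAt_iff_hasGradientAt.mp
      (((hH.differentiable (by simp) _).hasFDerivAt).comp _ hm)).gradient
  have hg3 : ∀ y, gradient (fun p => H (qA1 y, qA0 y, p, pB0 y)) (pB1 y) =
      (InnerProductSpace.toDual ℝ Q).symm
        ((fderiv ℝ H (qA1 y, qA0 y, pB1 y, pB0 y)).comp L3) := by
    intro y
    have hm : HasFDerivAt (fun p : Q => (qA1 y, qA0 y, p, pB0 y)) L3 (pB1 y) :=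
      (hasFDerivAt_const _ _).prodMk ((hasFDerivAt_const _ _).prodMk
        ((hasFDerivAt_id _).prodMk (hasFDerivAt_const _ _)))
    exact (hasFDerivAt_iff_hasGradientAt.mp
      (((hH.differentiable (by simp) _).hasFDerivAt).comp _ hm)).gradient
  have hg4 : ∀ y, gradient (fun p => H (qA1 y, qA0 y, pB1 y, p)) (pB0 y) =
      (InnerProductSpace.toDual ℝ Q).symm
        ((fderiv ℝ H (qA1 y, qA0 y, pB1 y, pB0 y)).comp L4) := by
    intro y
    have hm : HasFDerivAt (fun p : Q => (qA1 y, qA0 y, pB1 y, p)) L4 (pB0 y) :=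
      (hasFDerivAt_const _ _).prodMk ((hasFDerivAt_const _ _).prodMk
        ((hasFDerivAt_const _ _).prodMk (hasFDerivAt_id _)))
    exact (hasFDerivAt_iff_hasGradientAt.mp
      (((hH.differentiable (by simp) _).hasFDerivAt).comp _ hm)).gradient
  -- smoothness facts
  have hdH : ContDiff ℝ 1 (fderiv ℝ H) := hH.fderiv_right (WithTop.coe_le_coe.mpr le_top)
  have hΦ : ContDiff ℝ 1 (fun y => (qA1 y, qA0 y, pB1 y, pB0 y)) :=
    ((hqA1.prodMk (hqA0.prodMk (hpB1.prodMk hpB0))).of_le (by simp))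
  have hGd : ∀ L : Q →L[ℝ] Q × Q × Q × Q, Differentiable ℝ
      (fun y => (InnerProductSpace.toDual ℝ Q).symm
        ((fderiv ℝ H (qA1 y, qA0 y, pB1 y, pB0 y)).comp L)) := fun L =>
    (((InnerProductSpace.toDual ℝ Q).symm.contDiff).comp
      ((hdH.comp hΦ).clm_comp contDiff_const)).differentiable one_ne_zero
  have hG1 : DifferentiableAt ℝ
      (fun y => gradient (fun q => H (q, qA0 y, pB1 y, pB0 y)) (qA1 y)) x := by
    rw [funext hg1]; exact (hGd L1).differentiableAt
  have hG2 : DifferentiableAt ℝ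
      (fun y => gradient (fun q => H (qA1 y, q, pB1 y, pB0 y)) (qA0 y)) x := by
    rw [funext hg2]; exact (hGd L2).differentiableAt
  have hG3 : DifferentiableAt ℝ
      (fun y => gradient (fun p => H (qA1 y, qA0 y, p, pB0 y)) (pB1 y)) x := by
    rw [funext hg3]; exact (hGd L3).differentiableAt
  have hG4 : DifferentiableAt ℝ
      (fun y => gradient (fun p => H (qA1 y, qA0 y, pB1 y, p)) (pB0 y)) x := by
    rw [funext hg4]; exact (hGd L4).differentiableAt
  -- the chain rule for `F = H ∘ Φ`
  have hCR : ∀ y w : ℝ × ℝ,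
      fderiv ℝ (fun y => H (qA1 y, qA0 y, pB1 y, pB0 y)) y w =
        fderiv ℝ H (qA1 y, qA0 y, pB1 y, pB0 y)
          (fderiv ℝ qA1 y w, fderiv ℝ qA0 y w, fderiv ℝ pB1 y w, fderiv ℝ pB0 y w) := by
    intro y w
    have hΦ' : HasFDerivAt (fun y => (qA1 y, qA0 y, pB1 y, pB0 y))
        ((fderiv ℝ qA1 y).prod ((fderiv ℝ qA0 y).prod
          ((fderiv ℝ pB1 y).prod (fderiv ℝ pB0 y)))) y :=
      ((hqA1.differentiable (by simp) y).hasFDerivAt).prodMk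
        (((hqA0.differentiable (by simp) y).hasFDerivAt).prodMk
          (((hpB1.differentiable (by simp) y).hasFDerivAt).prodMk
            ((hpB0.differentiable (by simp) y).hasFDerivAt)))
    have hFy : HasFDerivAt (fun y => H (qA1 y, qA0 y, pB1 y, pB0 y))
        ((fderiv ℝ H (qA1 y, qA0 y, pB1 y, pB0 y)).comp
          ((fderiv ℝ qA1 y).prod ((fderiv ℝ qA0 y).prod
            ((fderiv ℝ pB1 y).prod (fderiv ℝ pB0 y))))) y :=
      ((hH.differentiable (by simp) _).hasFDerivAt).comp y hΦ'
    rw [hFy.fderiv]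
    simp
  -- the expression of `dF` through the gradients
  have hstar : ∀ y w : ℝ × ℝ,
      fderiv ℝ (fun y => H (qA1 y, qA0 y, pB1 y, pB0 y)) y w =
        ∑ i, ⟪(![fun y => gradient (fun q => H (q, qA0 y, pB1 y, pB0 y)) (qA1 y),
                fun y => gradient (fun q => H (qA1 y, q, pB1 y, pB0 y)) (qA0 y),
                fun y => gradient (fun p => H (qA1 y, qA0 y, p, pB0 y)) (pB1 y),
                fun y => gradient (fun p => H (qA1 y, qA0 y, pB1 y, p)) (pB0 y)] i) y,
              fderiv ℝ (![qA1, qA0, pB1, pB0] i) y w⟫ := by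
    intro y w
    rw [hCR y w]
    simp only [Fin.sum_univ_four, Matrix.cons_val_zero, Matrix.cons_val_one, Matrix.head_cons,
      Matrix.cons_val_two, Matrix.tail_cons, Matrix.cons_val_three]
    rw [hg1 y, hg2 y, hg3 y, hg4 y]
    simp only [InnerProductSpace.toDual_symm_apply, ContinuousLinearMap.comp_apply,
      hL1, hL2, hL3, hL4, ContinuousLinearMap.prod_apply, ContinuousLinearMap.coe_id', id_eq,
      ContinuousLinearMap.zero_apply]
    rw [← map_add, ← map_add, ← map_add]
    simp
  -- apply the abstract `d² = 0` lemma
  have key := key_aux (fun y => H (qA1 y, qA0 y, pB1 y, pB0 y))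
    ((hH.comp (hqA1.prodMk (hqA0.prodMk (hpB1.prodMk hpB0)))).of_le (WithTop.coe_le_coe.mpr le_top))
    ![fun y => gradient (fun q => H (q, qA0 y, pB1 y, pB0 y)) (qA1 y),
      fun y => gradient (fun q => H (qA1 y, q, pB1 y, pB0 y)) (qA0 y),
      fun y => gradient (fun p => H (qA1 y, qA0 y, p, pB0 y)) (pB1 y),
      fun y => gradient (fun p => H (qA1 y, qA0 y, pB1 y, p)) (pB0 y)]
    ![qA1, qA0, pB1, pB0] x V W
    (by intro i; fin_cases i <;>
      simp only [Matrix.cons_val_zero, Matrix.cons_val_one, Matrix.head_cons,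
        Matrix.cons_val_two, Matrix.tail_cons, Matrix.cons_val_three] <;>
      first
        | exact hG1
        | exact hG2
        | exact hG3
        | exact hG4)
    (by intro i; fin_cases i <;>
      simp only [Matrix.cons_val_zero, Matrix.cons_val_one, Matrix.head_cons,
        Matrix.cons_val_two, Matrix.tail_cons, Matrix.cons_val_three] <;>
      first
        | exact hqA1.of_le (WithTop.coe_le_coe.mpr le_top)
        | exact hqA0.of_le (WithTop.coe_le_coe.mpr le_top)
        | exact hpB1.of_le (WithTop.coe_le_coe.mpr le_top)
        | exact hpB0.of_le (WithTop.coe_le_coe.mpr le_top))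
    hstar
  simp only [Fin.sum_univ_four, Matrix.cons_val_zero, Matrix.cons_val_one, Matrix.head_cons,
    Matrix.cons_val_two, Matrix.tail_cons, Matrix.cons_val_three] at key
  obtain ⟨h1V, h2V, h3V, h4V⟩ := heq V (Or.inl rfl)
  obtain ⟨h1W, h2W, h3W, h4W⟩ := heq W (Or.inr rfl)
  rw [← h1V, ← h1W, ← h2V, ← h2W, ← h3V, ← h3W, ← h4V, ← h4W] at key
  simp only [real_inner_smul_left] at key
  rw [real_inner_comm (fderiv ℝ qB1 x V) (fderiv ℝ pB1 x W),
    real_inner_comm (fderiv ℝ qB1 x W) (fderiv ℝ pB1 x V),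
    real_inner_comm (fderiv ℝ qB0 x V) (fderiv ℝ pB0 x W),
    real_inner_comm (fderiv ℝ qB0 x W) (fderiv ℝ pB0 x V)]
  linear_combination key
end

section
/- Let $R : Q \times Q^* \times Q \to \mathbb{R}$, $R(q_0, p_1, q_1) = \langle p_1, q_1 \rangle - H(q_0, p_1)$ be the generalized discrete Lagrangian on a finite-dimensional real vector space $Q$ with smooth $H : Q \times Q^* \to \mathbb{R}$. Let a Lie group $G$ act linearly on $Q$ and by the dual (inverse-transpose) action on $Q^*$, and suppose $R$ is invariant under the diagonal action. If $(q_0, p_1, q_1)$ satisfies the discrete Hamilton's equations $q_1 = D_2 H(q_0, p_1)$ and $p_0 = D_1 H(q_0, p_1)$, then for every $\xi$ in the Lie algebra of $G$, $\langle p_1, \xi \cdot q_1 \rangle = \langle p_0, \xi \cdot q_0 \rangle$, i.e., the momentum map $\mathbf{J}_\xi(q,p) = \langle p, \xi \cdot q\rangle$ is preserved. -/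
open RealInnerProductSpace

/-- Discrete Noether's theorem for Hamiltonian variational integrators in mechanics.
The dual `Q^*` is identified with `Q` via the inner product, so that the pairing
`⟨p, q⟩` is `⟪p, q⟫` and the partial derivatives of `H` are gradients.  The group
action is given by a one-parameter group `ρ` of linear automorphisms of `Q`
(generated by `ξ`), with infinitesimal generator `A` (`A q = ξ · q`), acting on
momenta by the dual (inverse-transpose, i.e. inverse-adjoint) action.  If the
generalized discrete Lagrangian `R(q₀, p₁, q₁) = ⟨p₁, q₁⟩ - H(q₀, p₁)` is invariant
under the diagonal action and `(q₀, p₁, q₁, p₀)` satisfies the discrete Hamilton's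
equations, then the momentum map `J_ξ(q, p) = ⟨p, ξ · q⟩` is preserved. -/
theorem discrete_noether_mechanics
    {Q : Type*} [NormedAddCommGroup Q] [InnerProductSpace ℝ Q] [FiniteDimensional ℝ Q]
    (H : Q × Q → ℝ) (hH : ContDiff ℝ (⊤ : ℕ∞) H)
    (ρ : ℝ → (Q ≃L[ℝ] Q)) (hρ0 : ρ 0 = ContinuousLinearEquiv.refl ℝ Q)
    (A : Q →L[ℝ] Q) (hA : ∀ q, HasDerivAt (fun t => ρ t q) (A q) 0)
    (hinv : ∀ t (q0 p1 q1 : Q),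
      ⟪ContinuousLinearMap.adjoint ((ρ t).symm : Q →L[ℝ] Q) p1, ρ t q1⟫
          - H (ρ t q0, ContinuousLinearMap.adjoint ((ρ t).symm : Q →L[ℝ] Q) p1)
        = ⟪p1, q1⟫ - H (q0, p1))
    (q0 p1 q1 p0 : Q)
    (hq1 : q1 = gradient (fun p => H (q0, p)) p1)
    (hp0 : p0 = gradient (fun q => H (q, p1)) q0) :
    ⟪p1, A q1⟫ = ⟪p0, A q0⟫ := by
  classical
  have hdiff : Differentiable ℝ H := hH.differentiable (by simp)
  set F : ℝ → Q := fun t => ContinuousLinearMap.adjoint ((ρ t : Q →L[ℝ] Q)) p1 with hFdef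
  have hρ0' : ((ρ 0 : Q →L[ℝ] Q)) = ContinuousLinearMap.id ℝ Q := by
    ext x; simp [hρ0]
  have hF0 : F 0 = p1 := by
    simp [hFdef, hρ0', ContinuousLinearMap.adjoint_id]
  -- key identity H (ρ t q0, p1) = H (q0, F t)
  have hkey : ∀ t, H (ρ t q0, p1) = H (q0, F t) := by
    intro t
    have h := hinv t q0 (F t) q1
    have e1 : ContinuousLinearMap.adjoint ((ρ t).symm : Q →L[ℝ] Q) (F t) = p1 := by
      apply ext_inner_right ℝ
      intro x
      simp [hFdef, ContinuousLinearMap.adjoint_inner_left]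
    have e2 : ⟪F t, q1⟫ = ⟪p1, ρ t q1⟫ := by
      simp [hFdef, ContinuousLinearMap.adjoint_inner_left]
    rw [e1, e2] at h
    linarith
  -- derivative of F at 0 is adjoint A p1
  have hFd : HasDerivAt F (ContinuousLinearMap.adjoint A p1) 0 := by
    set b := stdOrthonormalBasis ℝ Q
    have hrep : F = fun t => ∑ i, ⟪p1, ρ t (b i)⟫ • b i := by
      funext t
      rw [← b.sum_repr' (F t)]
      refine Finset.sum_congr rfl fun i _ => ?_
      rw [real_inner_comm]
      simp [hFdef, ContinuousLinearMap.adjoint_inner_left]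
    have hsum : HasDerivAt (fun t => ∑ i, ⟪p1, ρ t (b i)⟫ • b i)
        (∑ i, ⟪p1, A (b i)⟫ • b i) 0 := by
      refine HasDerivAt.fun_sum fun i _ => ?_
      have h1 : HasDerivAt (fun t => ⟪p1, ρ t (b i)⟫)
          (⟪p1, A (b i)⟫ + ⟪(0 : Q), ρ 0 (b i)⟫) 0 :=
        (hasDerivAt_const 0 p1).inner ℝ (hA (b i))
      simpa using h1.smul_const (b i)
    have hval : (∑ i, ⟪p1, A (b i)⟫ • b i) = ContinuousLinearMap.adjoint A p1 := by
      rw [← b.sum_repr' (ContinuousLinearMap.adjoint A p1)]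
      refine Finset.sum_congr rfl fun i _ => ?_
      rw [ContinuousLinearMap.adjoint_inner_right, real_inner_comm]
    rw [hrep]
    rwa [hval] at hsum
  -- Fréchet derivative of H at (q0, p1)
  have hHF : HasFDerivAt H (fderiv ℝ H (q0, p1)) (q0, p1) := (hdiff (q0, p1)).hasFDerivAt
  -- derivative of t ↦ H (ρ t q0, p1)
  have hcurve1 : HasDerivAt (fun t => ((ρ t q0 : Q), p1)) ((A q0, (0 : Q))) 0 :=
    HasDerivAt.prodMk (hA q0) (hasDerivAt_const 0 p1)
  have hpt1 : (fun t => ((ρ t q0 : Q), p1)) 0 = (q0, p1) := by simp [hρ0]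
  have h1 : HasDerivAt (fun t => H (ρ t q0, p1)) (fderiv ℝ H (q0, p1) (A q0, 0)) 0 := by
    have hHF' : HasFDerivAt H (fderiv ℝ H (q0, p1)) ((ρ 0) q0, p1) := by
      rw [hρ0]; simpa using hHF
    exact hHF'.comp_hasDerivAt 0 hcurve1
  -- derivative of t ↦ H (q0, F t)
  have hcurve2 : HasDerivAt (fun t => ((q0 : Q), F t)) (((0 : Q), ContinuousLinearMap.adjoint A p1)) 0 :=
    HasDerivAt.prodMk (hasDerivAt_const 0 q0) hFd
  have h2 : HasDerivAt (fun t => H (q0, F t))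
      (fderiv ℝ H (q0, p1) (0, ContinuousLinearMap.adjoint A p1)) 0 := by
    have hHF2 : HasFDerivAt H (fderiv ℝ H (q0, p1)) ((fun t => ((q0 : Q), F t)) 0) := by
      simpa [hF0] using hHF
    exact hHF2.comp_hasDerivAt 0 hcurve2
  -- the two functions are equal, so the derivatives agree
  have hfun : (fun t => H (ρ t q0, p1)) = fun t => H (q0, F t) := funext hkey
  have heq : fderiv ℝ H (q0, p1) (A q0, 0)
      = fderiv ℝ H (q0, p1) (0, ContinuousLinearMap.adjoint A p1) := by
    rw [hfun] at h1
    exact h1.unique h2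
  -- relate gradients of partial maps to fderiv of H
  have grad_eq : ∀ (f : Q → ℝ) (x v : Q), ⟪gradient f x, v⟫ = fderiv ℝ f x v := by
    intro f x v
    rw [gradient]
    exact InnerProductSpace.toDual_symm_apply
  -- partial derivative in the first slot
  have hpart1 : HasFDerivAt (fun q => H (q, p1))
      ((fderiv ℝ H (q0, p1)).comp (ContinuousLinearMap.inl ℝ Q Q)) q0 := by
    have hc : HasFDerivAt (fun q : Q => (q, p1)) (ContinuousLinearMap.inl ℝ Q Q) q0 :=
      HasFDerivAt.prodMk (hasFDerivAt_id q0) (hasFDerivAt_const p1 q0)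
    exact hHF.comp q0 hc
  have hpart2 : HasFDerivAt (fun p => H (q0, p))
      ((fderiv ℝ H (q0, p1)).comp (ContinuousLinearMap.inr ℝ Q Q)) p1 := by
    have hc : HasFDerivAt (fun p : Q => ((q0 : Q), p)) (ContinuousLinearMap.inr ℝ Q Q) p1 :=
      HasFDerivAt.prodMk (hasFDerivAt_const q0 p1) (hasFDerivAt_id p1)
    exact hHF.comp p1 hc
  have e1 : ⟪p0, A q0⟫ = fderiv ℝ H (q0, p1) (A q0, 0) := by
    rw [hp0, grad_eq, hpart1.fderiv]
    simp
  have e2 : ⟪q1, ContinuousLinearMap.adjoint A p1⟫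
      = fderiv ℝ H (q0, p1) (0, ContinuousLinearMap.adjoint A p1) := by
    rw [hq1, grad_eq, hpart2.fderiv]
    simp
  have e3 : ⟪p1, A q1⟫ = ⟪q1, ContinuousLinearMap.adjoint A p1⟫ := by
    rw [ContinuousLinearMap.adjoint_inner_right]
    exact real_inner_comm _ _
  rw [e3, e2, ← heq, ← e1]
end

section
/- Discrete Noether's theorem for the multisymplectic integrator (one quadrature point per edge): Suppose $H_d^+ : Q \times Q \times Q^* \times Q^* \to \mathbb{R}$ is smooth and the generalized discrete Lagrangian $R_d(\varphi_A, \varphi_B, \pi_B) = \Delta t\, \langle \pi^1_B, \varphi^1_B \rangle + \Delta x\, \langle \pi^0_B, \varphi^0_B \rangle - H_d^+(\varphi^1_A, \varphi^0_A, \pi^1_B, \pi^0_B)$ is invariant under a vertical smooth $G$-action (acting on $Q$ components and dually on $Q^*$ components). Then along any solution of the discrete forward Hamilton's equations $\pi^1_A = \frac{1}{\Delta t} D_1 H_d^+$, $\pi^0_A = \frac{1}{\Delta x} D_2 H_d^+$, $\varphi^1_B = \frac{1}{\Delta t} D_3 H_d^+$, $\varphi^0_B = \frac{1}{\Delta x}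 D_4 H_d^+$, and for any Lie algebra element $\xi$ with infinitesimal generator $\xi_Q$ on $Q$: $\Delta t\, \langle \pi^1_B, \xi_Q(\varphi^1_B)\rangle + \Delta x\, \langle \pi^0_B, \xi_Q(\varphi^0_B)\rangle - \Delta t\, \langle \pi^1_A, \xi_Q(\varphi^1_A)\rangle - \Delta x\, \langle \pi^0_A, \xi_Q(\varphi^0_A)\rangle = 0$. -/
open RealInnerProductSpace

lemma op_deriv' {Q : Type*} [NormedAddCommGroup Q] [NormedSpace ℝ Q] [FiniteDimensional ℝ Q]
    (ρ : ℝ → (Q →L[ℝ] Q)) (A : Q →L[ℝ] Q)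
    (hA : ∀ q, HasDerivAt (fun t => ρ t q) (A q) 0) :
    HasDerivAt ρ A 0 := by
  classical
  set b := Module.Basis.ofVectorSpace ℝ Q with hb
  let e : (Q →L[ℝ] Q) ≃ₗ[ℝ] ((Module.Basis.ofVectorSpaceIndex ℝ Q) → Q) :=
    LinearMap.toContinuousLinearMap.symm.trans (b.constr ℝ).symm
  let E : (Q →L[ℝ] Q) ≃L[ℝ] ((Module.Basis.ofVectorSpaceIndex ℝ Q) → Q) :=
    e.toContinuousLinearEquiv
  have hE : ∀ (T : Q →L[ℝ] Q) i, E T i = T (b i) := by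
    intro T i
    have h2 : (b.constr (M' := Q) ℝ) ((b.constr ℝ).symm ((T : Q →ₗ[ℝ] Q)))
        = (T : Q →ₗ[ℝ] Q) := (b.constr ℝ).apply_symm_apply _
    have h3 := b.constr_basis ℝ ((b.constr ℝ).symm ((T : Q →ₗ[ℝ] Q))) i
    rw [h2] at h3
    exact h3.symm
  have hEρ : HasDerivAt (fun t => E (ρ t)) (E A) 0 := by
    rw [hasDerivAt_pi]
    intro i
    have := hA (b i)
    simp only [hE]
    exact this
  have : HasDerivAt (fun t => E.symm (E (ρ t))) (E.symm (E A)) 0 :=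
    (E.symm.toContinuousLinearMap.hasFDerivAt).comp_hasDerivAt 0 hEρ
  simpa using this

set_option synthInstance.maxHeartbeats 1000000 in
set_option maxHeartbeats 2000000 in
lemma symm_deriv' {Q : Type*} [NormedAddCommGroup Q] [NormedSpace ℝ Q] [FiniteDimensional ℝ Q]
    (ρ : ℝ → (Q ≃L[ℝ] Q)) (hρ0 : ρ 0 = ContinuousLinearEquiv.refl ℝ Q)
    (A : Q →L[ℝ] Q)
    (hA : HasDerivAt (fun t => (ρ t : Q →L[ℝ] Q)) A 0) :
    HasDerivAt (fun t => ((ρ t).symm : Q →L[ℝ] Q)) (-A) 0 := by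
  have hcmp : ∀ t, ((ρ t).symm : Q →L[ℝ] Q) = Ring.inverse ((ρ t : Q →L[ℝ] Q)) := by
    intro t
    rw [ContinuousLinearMap.ringInverse_equiv, ContinuousLinearMap.inverse_equiv]
  have h1 : HasFDerivAt Ring.inverse
      (-(ContinuousLinearMap.mulLeftRight ℝ (Q →L[ℝ] Q) (((1 : (Q →L[ℝ] Q)ˣ)⁻¹ : (Q →L[ℝ] Q)ˣ) : Q →L[ℝ] Q) (((1 : (Q →L[ℝ] Q)ˣ)⁻¹ : (Q →L[ℝ] Q)ˣ) : Q →L[ℝ] Q)))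
      ((1 : (Q →L[ℝ] Q)ˣ) : Q →L[ℝ] Q) := hasFDerivAt_ringInverse 1
  have hρ00 : (ρ 0 : Q →L[ℝ] Q) = ((1 : (Q →L[ℝ] Q)ˣ) : Q →L[ℝ] Q) := by
    rw [hρ0]; rfl
  have h1' : HasFDerivAt Ring.inverse
      (-(ContinuousLinearMap.mulLeftRight ℝ (Q →L[ℝ] Q) (((1 : (Q →L[ℝ] Q)ˣ)⁻¹ : (Q →L[ℝ] Q)ˣ) : Q →L[ℝ] Q) (((1 : (Q →L[ℝ] Q)ˣ)⁻¹ : (Q →L[ℝ] Q)ˣ) : Q →L[ℝ] Q)))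
      ((ρ 0 : Q →L[ℝ] Q)) := by rw [hρ00]; exact h1
  have h2 := h1'.comp_hasDerivAt 0 hA
  have h3 : HasDerivAt (fun t => Ring.inverse ((ρ t : Q →L[ℝ] Q))) (-A) 0 := by
    convert h2 using 1
    case e'_9 => simp
    all_goals rfl
  simpa only [hcmp] using h3

-- the adjoint as a real continuous linear map on operators
noncomputable def adjCLM (Q : Type*) [NormedAddCommGroup Q] [InnerProductSpace ℝ Q]
    [FiniteDimensional ℝ Q] : (Q →L[ℝ] Q) →L[ℝ] (Q →L[ℝ] Q) :=
  LinearMap.mkContinuous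
    { toFun := fun T => ContinuousLinearMap.adjoint T
      map_add' := fun S T => map_add (ContinuousLinearMap.adjoint (E := Q) (F := Q)) S T
      map_smul' := fun r T => by
        have := (ContinuousLinearMap.adjoint (E := Q) (F := Q)).map_smulₛₗ r T
        simpa using this }
    1 (fun T => by
      simp [LinearIsometryEquiv.norm_map])

lemma adjCLM_apply {Q : Type*} [NormedAddCommGroup Q] [InnerProductSpace ℝ Q]
    [FiniteDimensional ℝ Q] (T : Q →L[ℝ] Q) :
    adjCLM Q T = ContinuousLinearMap.adjoint T := rfl

lemma grad_inner {Q : Type*} [NormedAddCommGroup Q] [InnerProductSpace ℝ Q]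
    [FiniteDimensional ℝ Q] (f : Q → ℝ) (x v : Q) :
    ⟪gradient f x, v⟫ = fderiv ℝ f x v := by
  rw [gradient]
  exact InnerProductSpace.toDual_symm_apply

/-- Discrete Noether's theorem for the multisymplectic Hamiltonian variational
integrator with one quadrature point per edge.  `Q^*` is identified with `Q` via the
inner product; the vertical group action is a one-parameter group `ρ` of linear
automorphisms of `Q` with infinitesimal generator `A = ξ_Q`, acting on momenta by the
dual (inverse-adjoint) action.  If the generalized discrete Lagrangian
`R_d(φ_A, φ_B, π_B) = Δt ⟨π¹_B, φ¹_B⟩ + Δx ⟨π⁰_B, φ⁰_B⟩ - H_d⁺(φ¹_A, φ⁰_A, π¹_B, π⁰_B)`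
is invariant, then along any solution of the discrete forward Hamilton's equations the
discrete Noether conservation law holds. -/
theorem discrete_noether_multisymplectic
    {Q : Type*} [NormedAddCommGroup Q] [InnerProductSpace ℝ Q] [FiniteDimensional ℝ Q]
    (Δt Δx : ℝ) (hΔt : 0 < Δt) (hΔx : 0 < Δx)
    (Hd : Q × Q × Q × Q → ℝ) (hHd : ContDiff ℝ (⊤ : ℕ∞) Hd)
    (ρ : ℝ → (Q ≃L[ℝ] Q)) (hρ0 : ρ 0 = ContinuousLinearEquiv.refl ℝ Q)
    (A : Q →L[ℝ] Q) (hA : ∀ q, HasDerivAt (fun t => ρ t q) (A q) 0)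
    (hinv : ∀ t (φA1 φA0 φB1 φB0 πB1 πB0 : Q),
      Δt * ⟪ContinuousLinearMap.adjoint ((ρ t).symm : Q →L[ℝ] Q) πB1, ρ t φB1⟫
          + Δx * ⟪ContinuousLinearMap.adjoint ((ρ t).symm : Q →L[ℝ] Q) πB0, ρ t φB0⟫
          - Hd (ρ t φA1, ρ t φA0,
              ContinuousLinearMap.adjoint ((ρ t).symm : Q →L[ℝ] Q) πB1,
              ContinuousLinearMap.adjoint ((ρ t).symm : Q →L[ℝ] Q) πB0)
        = Δt * ⟪πB1, φB1⟫ + Δx * ⟪πB0, φB0⟫ - Hd (φA1, φA0, πB1, πB0))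
    (φA1 φA0 φB1 φB0 πA1 πA0 πB1 πB0 : Q)
    -- the discrete forward Hamilton's equations:
    (h1 : πA1 = Δt⁻¹ • gradient (fun q => Hd (q, φA0, πB1, πB0)) φA1)
    (h2 : πA0 = Δx⁻¹ • gradient (fun q => Hd (φA1, q, πB1, πB0)) φA0)
    (h3 : φB1 = Δt⁻¹ • gradient (fun p => Hd (φA1, φA0, p, πB0)) πB1)
    (h4 : φB0 = Δx⁻¹ • gradient (fun p => Hd (φA1, φA0, πB1, p)) πB0) :
    Δt * ⟪πB1, A φB1⟫ + Δx * ⟪πB0, A φB0⟫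
      - Δt * ⟪πA1, A φA1⟫ - Δx * ⟪πA0, A φA0⟫ = 0 := by
  classical
  set P : Q × Q × Q × Q := (φA1, φA0, πB1, πB0) with hP
  set σ : ℝ → Q → Q := fun t π => ContinuousLinearMap.adjoint ((ρ t).symm : Q →L[ℝ] Q) π with hσdef
  set F : ℝ → Q × Q × Q × Q := fun t => (ρ t φA1, ρ t φA0, σ t πB1, σ t πB0) with hF
  have hdiff : Differentiable ℝ Hd := hHd.differentiable (by simp)
  set D1 : (Q × Q × Q × Q) →L[ℝ] ℝ := fderiv ℝ Hd P with hD1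
  -- F is constant-composed with Hd
  have hconst : ∀ t, Hd (F t) = Hd P := by
    intro t
    have h := hinv t φA1 φA0 φB1 φB0 πB1 πB0
    have c1 : ⟪ContinuousLinearMap.adjoint ((ρ t).symm : Q →L[ℝ] Q) πB1, ρ t φB1⟫
        = ⟪πB1, φB1⟫ := by
      rw [ContinuousLinearMap.adjoint_inner_left]
      simp
    have c0 : ⟪ContinuousLinearMap.adjoint ((ρ t).symm : Q →L[ℝ] Q) πB0, ρ t φB0⟫
        = ⟪πB0, φB0⟫ := by
      rw [ContinuousLinearMap.adjoint_inner_left]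
      simp
    rw [c1, c0] at h
    simp only [hF, hσdef, hP]
    linarith
  -- F 0 = P
  have hF0 : F 0 = P := by
    simp only [hF, hσdef, hP, hρ0]
    simp [ContinuousLinearEquiv.refl_symm, ContinuousLinearMap.adjoint_id]
  -- derivative of t ↦ ρ t as operators
  have hop : HasDerivAt (fun t => ((ρ t : Q →L[ℝ] Q))) A 0 :=
    op_deriv' (fun t => (ρ t : Q →L[ℝ] Q)) A hA
  have hsym : HasDerivAt (fun t => (((ρ t).symm : Q →L[ℝ] Q))) (-A) 0 :=
    symm_deriv' ρ hρ0 A hop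
  have hadj : HasDerivAt (fun t => adjCLM Q (((ρ t).symm : Q →L[ℝ] Q)))
      (adjCLM Q (-A)) 0 :=
    ((adjCLM Q).hasFDerivAt).comp_hasDerivAt 0 hsym
  have hσ : ∀ π : Q, HasDerivAt (fun t => σ t π)
      (-(ContinuousLinearMap.adjoint A π)) 0 := by
    intro π
    have := hadj.clm_apply (hasDerivAt_const (0:ℝ) π)
    simp only [map_zero, add_zero] at this
    have h2 : (adjCLM Q (-A)) π = -(ContinuousLinearMap.adjoint A π) := by
      rw [map_neg]
      rfl
    rw [h2] at this
    convert this using 1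
    rfl
  -- derivative of F
  have hF' : HasDerivAt F
      (A φA1, A φA0, -(ContinuousLinearMap.adjoint A πB1),
        -(ContinuousLinearMap.adjoint A πB0)) 0 :=
    (hA φA1).prodMk ((hA φA0).prodMk ((hσ πB1).prodMk (hσ πB0)))
  -- chain rule + constancy give the key identity
  have hkey : D1 (A φA1, A φA0, -(ContinuousLinearMap.adjoint A πB1),
      -(ContinuousLinearMap.adjoint A πB0)) = 0 := by
    have hc : HasDerivAt (fun t => Hd (F t))
        (D1 (A φA1, A φA0, -(ContinuousLinearMap.adjoint A πB1),
          -(ContinuousLinearMap.adjoint A πB0))) 0 := by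
      have h := (hdiff P).hasFDerivAt
      have h' : HasFDerivAt Hd (D1 : (Q × Q × Q × Q) →L[ℝ] ℝ) (F 0) := by
        rw [hF0]; exact h
      exact h'.comp_hasDerivAt 0 hF'
    have hc2 : (fun t => Hd (F t)) = fun _ => Hd P := funext hconst
    rw [hc2] at hc
    exact hc.unique (hasDerivAt_const 0 (Hd P))
  -- partial derivatives
  have hpart1 : ∀ v : Q, fderiv ℝ (fun q => Hd (q, φA0, πB1, πB0)) φA1 v
      = D1 (v, 0, 0, 0) := by
    intro v
    have hj : HasFDerivAt (fun q : Q => (q, φA0, πB1, πB0))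
        ((ContinuousLinearMap.id ℝ Q).prod 0) φA1 :=
      (hasFDerivAt_id φA1).prodMk (hasFDerivAt_const _ _)
    have h5 : fderiv ℝ (fun q => Hd (q, φA0, πB1, πB0)) φA1
        = (fderiv ℝ Hd P).comp ((ContinuousLinearMap.id ℝ Q).prod 0) :=
      ((hdiff P).hasFDerivAt.comp φA1 hj).fderiv
    rw [h5]
    rfl
  have hpart2 : ∀ v : Q, fderiv ℝ (fun q => Hd (φA1, q, πB1, πB0)) φA0 v
      = D1 (0, v, 0, 0) := by
    intro v
    have hj : HasFDerivAt (fun q : Q => (φA1, q, πB1, πB0))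
        ((0 : Q →L[ℝ] Q).prod ((ContinuousLinearMap.id ℝ Q).prod 0)) φA0 :=
      (hasFDerivAt_const _ _).prodMk ((hasFDerivAt_id φA0).prodMk (hasFDerivAt_const _ _))
    have h5 : fderiv ℝ (fun q => Hd (φA1, q, πB1, πB0)) φA0
        = (fderiv ℝ Hd P).comp ((0 : Q →L[ℝ] Q).prod ((ContinuousLinearMap.id ℝ Q).prod 0)) :=
      ((hdiff P).hasFDerivAt.comp φA0 hj).fderiv
    rw [h5]
    rfl
  have hpart3 : ∀ v : Q, fderiv ℝ (fun p => Hd (φA1, φA0, p, πB0)) πB1 v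
      = D1 (0, 0, v, 0) := by
    intro v
    have hj : HasFDerivAt (fun p : Q => (φA1, φA0, p, πB0))
        ((0 : Q →L[ℝ] Q).prod ((0 : Q →L[ℝ] Q).prod ((ContinuousLinearMap.id ℝ Q).prod 0))) πB1 :=
      (hasFDerivAt_const _ _).prodMk ((hasFDerivAt_const _ _).prodMk
        ((hasFDerivAt_id πB1).prodMk (hasFDerivAt_const _ _)))
    have h5 : fderiv ℝ (fun p => Hd (φA1, φA0, p, πB0)) πB1
        = (fderiv ℝ Hd P).comp ((0 : Q →L[ℝ] Q).prod ((0 : Q →L[ℝ] Q).prod ((ContinuousLinearMap.id ℝ Q).prod 0))) :=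
      ((hdiff P).hasFDerivAt.comp πB1 hj).fderiv
    rw [h5]
    rfl
  have hpart4 : ∀ v : Q, fderiv ℝ (fun p => Hd (φA1, φA0, πB1, p)) πB0 v
      = D1 (0, 0, 0, v) := by
    intro v
    have hj : HasFDerivAt (fun p : Q => (φA1, φA0, πB1, p))
        ((0 : Q →L[ℝ] Q).prod ((0 : Q →L[ℝ] Q).prod
          ((0 : Q →L[ℝ] Q).prod (ContinuousLinearMap.id ℝ Q)))) πB0 :=
      (hasFDerivAt_const _ _).prodMk ((hasFDerivAt_const _ _).prodMk
        ((hasFDerivAt_const _ _).prodMk (hasFDerivAt_id πB0)))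
    have h5 : fderiv ℝ (fun p => Hd (φA1, φA0, πB1, p)) πB0
        = (fderiv ℝ Hd P).comp ((0 : Q →L[ℝ] Q).prod ((0 : Q →L[ℝ] Q).prod ((0 : Q →L[ℝ] Q).prod (ContinuousLinearMap.id ℝ Q)))) :=
      ((hdiff P).hasFDerivAt.comp πB0 hj).fderiv
    rw [h5]
    rfl
  -- translate Hamilton's equations
  have e1 : Δt * ⟪πA1, A φA1⟫ = D1 (A φA1, 0, 0, 0) := by
    rw [h1, real_inner_smul_left, ← hpart1 (A φA1), ← grad_inner]
    field_simp
  have e2 : Δx * ⟪πA0, A φA0⟫ = D1 (0, A φA0, 0, 0) := by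
    rw [h2, real_inner_smul_left, ← hpart2 (A φA0), ← grad_inner]
    field_simp
  have e3 : Δt * ⟪πB1, A φB1⟫ = D1 (0, 0, ContinuousLinearMap.adjoint A πB1, 0) := by
    have : ⟪πB1, A φB1⟫ = ⟪φB1, ContinuousLinearMap.adjoint A πB1⟫ := by
      rw [ContinuousLinearMap.adjoint_inner_right, real_inner_comm]
    rw [this, h3, real_inner_smul_left, ← hpart3 (ContinuousLinearMap.adjoint A πB1),
      ← grad_inner]
    field_simp
  have e4 : Δx * ⟪πB0, A φB0⟫ = D1 (0, 0, 0, ContinuousLinearMap.adjoint A πB0) := by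
    have : ⟪πB0, A φB0⟫ = ⟪φB0, ContinuousLinearMap.adjoint A πB0⟫ := by
      rw [ContinuousLinearMap.adjoint_inner_right, real_inner_comm]
    rw [this, h4, real_inner_smul_left, ← hpart4 (ContinuousLinearMap.adjoint A πB0),
      ← grad_inner]
    field_simp
  -- linearity of D1
  have hsplit : D1 (A φA1, A φA0, -(ContinuousLinearMap.adjoint A πB1),
      -(ContinuousLinearMap.adjoint A πB0))
      = D1 (A φA1, 0, 0, 0) + D1 (0, A φA0, 0, 0)
        - D1 (0, 0, ContinuousLinearMap.adjoint A πB1, 0)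
        - D1 (0, 0, 0, ContinuousLinearMap.adjoint A πB0) := by
    have : (A φA1, A φA0, -(ContinuousLinearMap.adjoint A πB1),
        -(ContinuousLinearMap.adjoint A πB0))
        = (A φA1, (0:Q), (0:Q), (0:Q)) + ((0:Q), A φA0, (0:Q), (0:Q))
          - ((0:Q), (0:Q), ContinuousLinearMap.adjoint A πB1, (0:Q))
          - ((0:Q), (0:Q), (0:Q), ContinuousLinearMap.adjoint A πB0) := by
      simp [Prod.ext_iff]
    rw [this, map_sub, map_sub, map_add]
  rw [e1, e2, e3, e4]
  rw [hsplit] at hkey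
  linarith
end

section
/- Elimination identity for the sine–Gordon multisymplectic Euler scheme: suppose real sequences $\varphi_{a,b}, \pi^0_{a,b}, \pi^1_{a,b}$ (indexed by integers $a, b$) satisfy, for all $a, b$: $\varphi_{a+1,b} = \varphi_{a,b} + \Delta t\, \pi^0_{a,b}$; $\pi^0_{a+1,b} = \pi^0_{a,b} + \Delta t\, X_{a,b-1}$ and $\pi^1_{a+1,b} = \pi^1_{a+1,b-1} + \Delta x\, Y_{a,b-1}$ where $X_{a,b} + Y_{a,b} = -\sin(\varphi_{a+1,b+1})$; and $\varphi_{a+1,b+1} = \varphi_{a+1,b} - \Delta x\, \pi^1_{a+1,b}$. Then for all $a,b$: $\pi^0_{a+1,b} = \pi^0_{a,b} + \Delta t\, \frac{\varphi_{a+1,b+1} - 2\varphi_{a+1,b} + \varphi_{a+1,b-1}}{\Delta x^2} - \Delta t\, \sin(\varphi_{a+1,b})$. -/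
/-!
The spatial half of the scheme is a staggered first-order system: `φ` steps by `-Δx π¹` and
`π¹` steps by `Δx Y`, so the second difference of `φ` is `-Δx² Y`. Substituting
`X = -sin φ - Y` into the momentum update then turns `Δt X` into the discrete Laplacian term
minus `Δt sin φ`.
-/

theorem secondDiff_eq_of_staggered_steps {R : Type*} [CommRing R] {Δx : R}
    {f p y : ℤ → R} (hp : ∀ b, p b = p (b - 1) + Δx * y (b - 1)) (hf : ∀ b, f (b + 1) = f b - Δx * p b)
    (b : ℤ) : f (b + 1) - 2 * f b + f (b - 1) = -Δx ^ 2 * y (b - 1) := by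
  have hf_prev := hf (b - 1)
  rw [sub_add_cancel] at hf_prev
  linear_combination hf b - hf_prev - Δx * hp b

theorem sineGordon_MSE_elimination_general
    (Δt Δx : ℝ) (hΔx : 0 < Δx)
    (φ π0 π1 X Y : ℤ → ℤ → ℝ)
    (h2 : ∀ a b, π0 (a + 1) b = π0 a b + Δt * X a (b - 1))
    (h3 : ∀ a b, π1 (a + 1) b = π1 (a + 1) (b - 1) + Δx * Y a (b - 1))
    (h4 : ∀ a b, X a b + Y a b = -Real.sin (φ (a + 1) (b + 1)))
    (h5 : ∀ a b, φ (a + 1) (b + 1) = φ (a + 1) b - Δx * π1 (a + 1) b) :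
    ∀ a b, π0 (a + 1) b = π0 a b
        + Δt * ((φ (a + 1) (b + 1) - 2 * φ (a + 1) b + φ (a + 1) (b - 1)) / Δx ^ 2)
        - Δt * Real.sin (φ (a + 1) b) := by
  intro a b
  have hlap : (φ (a + 1) (b + 1) - 2 * φ (a + 1) b + φ (a + 1) (b - 1)) / Δx ^ 2
      = -Y a (b - 1) := by
    rw [secondDiff_eq_of_staggered_steps (h3 a) (h5 a) b]
    field_simp [hΔx.ne']
  have hX : X a (b - 1) = -Real.sin (φ (a + 1) b) - Y a (b - 1) := by
    have h4_prev := h4 a (b - 1)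
    rw [sub_add_cancel] at h4_prev
    linarith
  rw [h2, hlap, hX]
  ring

/-- Elimination identity for the sine–Gordon multisymplectic Euler scheme: eliminating
the internal stage variables `X, Y` and the spatial momenta `π¹` from the one-stage
multisymplectic partitioned Runge–Kutta scheme yields the explicit scheme combining the
standard discrete Laplacian in space with the adjoint symplectic Euler method in time. -/
theorem sineGordon_MSE_elimination
    (Δt Δx : ℝ) (hΔt : 0 < Δt) (hΔx : 0 < Δx)
    (φ π0 π1 X Y : ℤ → ℤ → ℝ)
    (h1 : ∀ a b, φ (a + 1) b = φ a b + Δt * π0 a b)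
    (h2 : ∀ a b, π0 (a + 1) b = π0 a b + Δt * X a (b - 1))
    (h3 : ∀ a b, π1 (a + 1) b = π1 (a + 1) (b - 1) + Δx * Y a (b - 1))
    (h4 : ∀ a b, X a b + Y a b = -Real.sin (φ (a + 1) (b + 1)))
    (h5 : ∀ a b, φ (a + 1) (b + 1) = φ (a + 1) b - Δx * π1 (a + 1) b) :
    ∀ a b, π0 (a + 1) b = π0 a b
        + Δt * ((φ (a + 1) (b + 1) - 2 * φ (a + 1) b + φ (a + 1) (b - 1)) / Δx ^ 2)
        - Δt * Real.sin (φ (a + 1) b) :=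
  sineGordon_MSE_elimination_general Δt Δx hΔx φ π0 π1 X Y h2 h3 h4 h5
end

section
/- Let $N, M \geq 1$ and let $H : \mathbb{R}^4 \to \mathbb{R}$ be smooth. Define the discrete action $S_d = -\sum_{a=0}^{N-1}\sum_{b=0}^{M-2} \Delta t\, \pi^1_{[a]b+1}\varphi_{[a]b+1} - \sum_{a=0}^{N-2}\sum_{b=0}^{M-1} \Delta x\, \pi^0_{a+1[b]}\varphi_{a+1[b]} + \sum_{a=0}^{N-1}\sum_{b=0}^{M-1} H(\varphi_{[a]b}, \varphi_{a[b]}, \pi^1_{[a]b+1}, \pi^0_{a+1[b]})$, viewed as a smooth function of all variables $\varphi_{[a]b}$ ($0 \le a \le N-1$, $1 \le b \le M-1$), $\varphi_{a[b]}$ ($1 \le a \le N-1$, $0 \le b \le M-1$), $\pi^1_{[a]b}$ ($0 \le a \le N-1$, $1 \le b \le M-1$), $\pi^0_{a[b]}$ ($1 \le a \le N-1$, $0 \le b \le M-1$). Then $S_d$ is stationary (all partial derivatives vanish) if and only if for all indices in the appropriate ranges: $\Delta t\, \pi^1_{[a]b} = D_1 H[a,b]$, $\Delta x\, \pi^0_{a[b]}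 = D_2 H[a,b]$, $\Delta t\, \varphi_{[a]b+1} = D_3 H[a,b]$, and $\Delta x\, \varphi_{a+1[b]} = D_4 H[a,b]$, where $H[a,b] = H(\varphi_{[a]b}, \varphi_{a[b]}, \pi^1_{[a]b+1}, \pi^0_{a+1[b]})$. -/
/-- Update a doubly-indexed family of reals at a single index pair. -/
noncomputable def upd2 (f : ℕ → ℕ → ℝ) (a b : ℕ) (t : ℝ) : ℕ → ℕ → ℝ :=
  fun a' b' => if a' = a ∧ b' = b then t else f a' b'

/-- The discrete action sum for the one-quadrature-point Type II variational principle
(scalar field, `1+1` dimensions). Here `φ1 a b = φ_{[a]b}`, `φ0 a b = φ_{a[b]}`,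
`π1 a b = π¹_{[a]b}`, `π0 a b = π⁰_{a[b]}`. -/
noncomputable def Sd (N M : ℕ) (Δt Δx : ℝ) (H : ℝ → ℝ → ℝ → ℝ → ℝ)
    (φ1 φ0 π1 π0 : ℕ → ℕ → ℝ) : ℝ :=
  -(∑ a ∈ Finset.range N, ∑ b ∈ Finset.range (M - 1), Δt * π1 a (b + 1) * φ1 a (b + 1))
    - (∑ a ∈ Finset.range (N - 1), ∑ b ∈ Finset.range M, Δx * π0 (a + 1) b * φ0 (a + 1) b)
    + ∑ a ∈ Finset.range N, ∑ b ∈ Finset.range M,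
        H (φ1 a b) (φ0 a b) (π1 a (b + 1)) (π0 (a + 1) b)

lemma split2 {N M a b : ℕ} (ha : a < N) (hb : b < M) (F : ℕ → ℕ → ℝ) :
    ∑ a' ∈ Finset.range N, ∑ b' ∈ Finset.range M, F a' b'
      = F a b + ∑ a' ∈ Finset.range N, ∑ b' ∈ Finset.range M,
          (if a' = a ∧ b' = b then 0 else F a' b') := by
  classical
  rw [← Finset.sum_product', ← Finset.sum_product']
  have hmem : (a, b) ∈ Finset.range N ×ˢ Finset.range M := by
    simp [Finset.mem_product, ha, hb]
  rw [← Finset.add_sum_erase _ _ hmem]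
  congr 1
  rw [← Finset.sum_erase (Finset.range N ×ˢ Finset.range M)
      (f := fun p : ℕ × ℕ => if p.1 = a ∧ p.2 = b then (0:ℝ) else F p.1 p.2)
      (a := (a, b)) (by simp)]
  refine Finset.sum_congr rfl fun p hp => ?_
  rw [if_neg]
  rintro ⟨h1, h2⟩
  exact (Finset.mem_erase.mp hp).1 (Prod.ext h1 h2)

lemma key1 (N M : ℕ) (Δt Δx : ℝ) (H : ℝ → ℝ → ℝ → ℝ → ℝ)
    (φ1 φ0 π1 π0 : ℕ → ℕ → ℝ) (a b : ℕ)
    (ha : a < N) (hb1 : 1 ≤ b) (hb2 : b ≤ M - 1) (t : ℝ) :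
    Sd N M Δt Δx H (upd2 φ1 a b t) φ0 π1 π0
      = -(Δt * π1 a b) * t + H t (φ0 a b) (π1 a (b + 1)) (π0 (a + 1) b)
        + (-(∑ a' ∈ Finset.range N, ∑ b' ∈ Finset.range (M - 1),
              if a' = a ∧ b' = b - 1 then 0 else Δt * π1 a' (b' + 1) * φ1 a' (b' + 1))
          - (∑ a' ∈ Finset.range (N - 1), ∑ b' ∈ Finset.range M,
              Δx * π0 (a' + 1) b' * φ0 (a' + 1) b')
          + ∑ a' ∈ Finset.range N, ∑ b' ∈ Finset.range M,
              if a' = a ∧ b' = b then 0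
              else H (φ1 a' b') (φ0 a' b') (π1 a' (b' + 1)) (π0 (a' + 1) b')) := by
  have hM : b < M := by omega
  have hb' : b - 1 + 1 = b := by omega
  have e1 := split2 ha (show b - 1 < M - 1 by omega)
      (fun a' b' => Δt * π1 a' (b' + 1) * upd2 φ1 a b t a' (b' + 1))
  rw [hb', show upd2 φ1 a b t a b = t by simp [upd2]] at e1
  have r1 : ∀ a' b' : ℕ, (if a' = a ∧ b' = b - 1 then (0:ℝ)
        else Δt * π1 a' (b' + 1) * upd2 φ1 a b t a' (b' + 1))
      = (if a' = a ∧ b' = b - 1 then 0 else Δt * π1 a' (b' + 1) * φ1 a' (b' + 1)) := by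
    intro a' b'
    by_cases h : a' = a ∧ b' = b - 1
    · simp [h]
    · simp only [if_neg h]
      congr 1
      simp only [upd2]
      rw [if_neg]
      rintro ⟨rfl, h2⟩
      exact h ⟨rfl, by omega⟩
  simp only [r1] at e1
  have e3 := split2 ha hM
      (fun a' b' => H (upd2 φ1 a b t a' b') (φ0 a' b') (π1 a' (b' + 1)) (π0 (a' + 1) b'))
  rw [show upd2 φ1 a b t a b = t by simp [upd2]] at e3
  have r3 : ∀ a' b' : ℕ, (if a' = a ∧ b' = b then (0:ℝ)
        else H (upd2 φ1 a b t a' b') (φ0 a' b') (π1 a' (b' + 1)) (π0 (a' + 1) b'))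
      = (if a' = a ∧ b' = b then 0
        else H (φ1 a' b') (φ0 a' b') (π1 a' (b' + 1)) (π0 (a' + 1) b')) := by
    intro a' b'
    by_cases h : a' = a ∧ b' = b
    · simp [h]
    · simp only [if_neg h]
      congr 1
      simp only [upd2, if_neg h]
  simp only [r3] at e3
  simp only [Sd]
  rw [e1, e3]
  ring

lemma key2 (N M : ℕ) (Δt Δx : ℝ) (H : ℝ → ℝ → ℝ → ℝ → ℝ)
    (φ1 φ0 π1 π0 : ℕ → ℕ → ℝ) (a b : ℕ)
    (ha1 : 1 ≤ a) (ha2 : a ≤ N - 1) (hb : b < M) (t : ℝ) :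
    Sd N M Δt Δx H φ1 (upd2 φ0 a b t) π1 π0
      = -(Δx * π0 a b) * t + H (φ1 a b) t (π1 a (b + 1)) (π0 (a + 1) b)
        + (-(∑ a' ∈ Finset.range N, ∑ b' ∈ Finset.range (M - 1),
              Δt * π1 a' (b' + 1) * φ1 a' (b' + 1))
          - (∑ a' ∈ Finset.range (N - 1), ∑ b' ∈ Finset.range M,
              if a' = a - 1 ∧ b' = b then 0 else Δx * π0 (a' + 1) b' * φ0 (a' + 1) b')
          + ∑ a' ∈ Finset.range N, ∑ b' ∈ Finset.range M,
              if a' = a ∧ b' = b then 0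
              else H (φ1 a' b') (φ0 a' b') (π1 a' (b' + 1)) (π0 (a' + 1) b')) := by
  have hN : a < N := by omega
  have ha' : a - 1 + 1 = a := by omega
  have e2 := split2 (show a - 1 < N - 1 by omega) hb
      (fun a' b' => Δx * π0 (a' + 1) b' * upd2 φ0 a b t (a' + 1) b')
  rw [ha', show upd2 φ0 a b t a b = t by simp [upd2]] at e2
  have r2 : ∀ a' b' : ℕ, (if a' = a - 1 ∧ b' = b then (0:ℝ)
        else Δx * π0 (a' + 1) b' * upd2 φ0 a b t (a' + 1) b')
      = (if a' = a - 1 ∧ b' = b then 0 else Δx * π0 (a' + 1) b' * φ0 (a' + 1) b') := by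
    intro a' b'
    by_cases h : a' = a - 1 ∧ b' = b
    · simp [h]
    · simp only [if_neg h]
      congr 1
      simp only [upd2]
      rw [if_neg]
      rintro ⟨h1, rfl⟩
      exact h ⟨by omega, rfl⟩
  simp only [r2] at e2
  have e3 := split2 hN hb
      (fun a' b' => H (φ1 a' b') (upd2 φ0 a b t a' b') (π1 a' (b' + 1)) (π0 (a' + 1) b'))
  rw [show upd2 φ0 a b t a b = t by simp [upd2]] at e3
  have r3 : ∀ a' b' : ℕ, (if a' = a ∧ b' = b then (0:ℝ)
        else H (φ1 a' b') (upd2 φ0 a b t a' b') (π1 a' (b' + 1)) (π0 (a' + 1) b'))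
      = (if a' = a ∧ b' = b then 0
        else H (φ1 a' b') (φ0 a' b') (π1 a' (b' + 1)) (π0 (a' + 1) b')) := by
    intro a' b'
    by_cases h : a' = a ∧ b' = b
    · simp [h]
    · simp only [if_neg h]
      congr 1
      simp only [upd2, if_neg h]
  simp only [r3] at e3
  simp only [Sd]
  rw [e2, e3]
  ring

lemma key3 (N M : ℕ) (Δt Δx : ℝ) (H : ℝ → ℝ → ℝ → ℝ → ℝ)
    (φ1 φ0 π1 π0 : ℕ → ℕ → ℝ) (a b : ℕ)
    (ha : a < N) (hb1 : 1 ≤ b) (hb2 : b ≤ M - 1) (t : ℝ) :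
    Sd N M Δt Δx H φ1 φ0 (upd2 π1 a b t) π0
      = -(Δt * φ1 a b) * t + H (φ1 a (b - 1)) (φ0 a (b - 1)) t (π0 (a + 1) (b - 1))
        + (-(∑ a' ∈ Finset.range N, ∑ b' ∈ Finset.range (M - 1),
              if a' = a ∧ b' = b - 1 then 0 else Δt * π1 a' (b' + 1) * φ1 a' (b' + 1))
          - (∑ a' ∈ Finset.range (N - 1), ∑ b' ∈ Finset.range M,
              Δx * π0 (a' + 1) b' * φ0 (a' + 1) b')
          + ∑ a' ∈ Finset.range N, ∑ b' ∈ Finset.range M,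
              if a' = a ∧ b' = b - 1 then 0
              else H (φ1 a' b') (φ0 a' b') (π1 a' (b' + 1)) (π0 (a' + 1) b')) := by
  have hb' : b - 1 + 1 = b := by omega
  have e1 := split2 ha (show b - 1 < M - 1 by omega)
      (fun a' b' => Δt * upd2 π1 a b t a' (b' + 1) * φ1 a' (b' + 1))
  rw [hb', show upd2 π1 a b t a b = t by simp [upd2]] at e1
  have r1 : ∀ a' b' : ℕ, (if a' = a ∧ b' = b - 1 then (0:ℝ)
        else Δt * upd2 π1 a b t a' (b' + 1) * φ1 a' (b' + 1))
      = (if a' = a ∧ b' = b - 1 then 0 else Δt * π1 a' (b' + 1) * φ1 a' (b' + 1)) := by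
    intro a' b'
    by_cases h : a' = a ∧ b' = b - 1
    · simp [h]
    · simp only [if_neg h]
      congr 2
      simp only [upd2]
      rw [if_neg]
      rintro ⟨rfl, h2⟩
      exact h ⟨rfl, by omega⟩
  simp only [r1] at e1
  have e3 := split2 ha (show b - 1 < M by omega)
      (fun a' b' => H (φ1 a' b') (φ0 a' b') (upd2 π1 a b t a' (b' + 1)) (π0 (a' + 1) b'))
  rw [hb', show upd2 π1 a b t a b = t by simp [upd2]] at e3
  have r3 : ∀ a' b' : ℕ, (if a' = a ∧ b' = b - 1 then (0:ℝ)
        else H (φ1 a' b') (φ0 a' b') (upd2 π1 a b t a' (b' + 1)) (π0 (a' + 1) b'))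
      = (if a' = a ∧ b' = b - 1 then 0
        else H (φ1 a' b') (φ0 a' b') (π1 a' (b' + 1)) (π0 (a' + 1) b')) := by
    intro a' b'
    by_cases h : a' = a ∧ b' = b - 1
    · simp [h]
    · simp only [if_neg h]
      congr 1
      simp only [upd2]
      rw [if_neg]
      rintro ⟨rfl, h2⟩
      exact h ⟨rfl, by omega⟩
  simp only [r3] at e3
  simp only [Sd]
  rw [e1, e3]
  ring

lemma key4 (N M : ℕ) (Δt Δx : ℝ) (H : ℝ → ℝ → ℝ → ℝ → ℝ)
    (φ1 φ0 π1 π0 : ℕ → ℕ → ℝ) (a b : ℕ)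
    (ha1 : 1 ≤ a) (ha2 : a ≤ N - 1) (hb : b < M) (t : ℝ) :
    Sd N M Δt Δx H φ1 φ0 π1 (upd2 π0 a b t)
      = -(Δx * φ0 a b) * t + H (φ1 (a - 1) b) (φ0 (a - 1) b) (π1 (a - 1) (b + 1)) t
        + (-(∑ a' ∈ Finset.range N, ∑ b' ∈ Finset.range (M - 1),
              Δt * π1 a' (b' + 1) * φ1 a' (b' + 1))
          - (∑ a' ∈ Finset.range (N - 1), ∑ b' ∈ Finset.range M,
              if a' = a - 1 ∧ b' = b then 0 else Δx * π0 (a' + 1) b' * φ0 (a' + 1) b')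
          + ∑ a' ∈ Finset.range N, ∑ b' ∈ Finset.range M,
              if a' = a - 1 ∧ b' = b then 0
              else H (φ1 a' b') (φ0 a' b') (π1 a' (b' + 1)) (π0 (a' + 1) b')) := by
  have ha' : a - 1 + 1 = a := by omega
  have e2 := split2 (show a - 1 < N - 1 by omega) hb
      (fun a' b' => Δx * upd2 π0 a b t (a' + 1) b' * φ0 (a' + 1) b')
  rw [ha', show upd2 π0 a b t a b = t by simp [upd2]] at e2
  have r2 : ∀ a' b' : ℕ, (if a' = a - 1 ∧ b' = b then (0:ℝ)
        else Δx * upd2 π0 a b t (a' + 1) b' * φ0 (a' + 1) b')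
      = (if a' = a - 1 ∧ b' = b then 0 else Δx * π0 (a' + 1) b' * φ0 (a' + 1) b') := by
    intro a' b'
    by_cases h : a' = a - 1 ∧ b' = b
    · simp [h]
    · simp only [if_neg h]
      congr 2
      simp only [upd2]
      rw [if_neg]
      rintro ⟨h1, rfl⟩
      exact h ⟨by omega, rfl⟩
  simp only [r2] at e2
  have e3 := split2 (show a - 1 < N by omega) hb
      (fun a' b' => H (φ1 a' b') (φ0 a' b') (π1 a' (b' + 1)) (upd2 π0 a b t (a' + 1) b'))
  rw [ha', show upd2 π0 a b t a b = t by simp [upd2]] at e3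
  have r3 : ∀ a' b' : ℕ, (if a' = a - 1 ∧ b' = b then (0:ℝ)
        else H (φ1 a' b') (φ0 a' b') (π1 a' (b' + 1)) (upd2 π0 a b t (a' + 1) b'))
      = (if a' = a - 1 ∧ b' = b then 0
        else H (φ1 a' b') (φ0 a' b') (π1 a' (b' + 1)) (π0 (a' + 1) b')) := by
    intro a' b'
    by_cases h : a' = a - 1 ∧ b' = b
    · simp [h]
    · simp only [if_neg h]
      congr 1
      simp only [upd2]
      rw [if_neg]
      rintro ⟨h1, rfl⟩
      exact h ⟨by omega, rfl⟩
  simp only [r3] at e3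
  simp only [Sd]
  rw [e2, e3]
  ring

lemma derivEq (c C x : ℝ) (g : ℝ → ℝ) (hg : Differentiable ℝ g) :
    deriv (fun t => -c * t + g t + C) x = -c + deriv g x := by
  have h1 : HasDerivAt (fun t : ℝ => -c * t) (-c) x := by
    simpa using (hasDerivAt_id x).const_mul (-c)
  exact ((h1.add (hg x).hasDerivAt).add_const C).deriv
/-- The Type II variational principle: the discrete action `S_d` is stationary with
respect to all interior variables (the boundary variables `φ_{[a]0}`, `φ_{0[b]}`,
`π¹_{[a]M}`, `π⁰_{N[b]}` being held fixed) if and only if the discrete forward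
Hamilton's equations hold. -/
theorem discrete_hamiltons_equations (N M : ℕ) (hN : 1 ≤ N) (hM : 1 ≤ M)
    (Δt Δx : ℝ) (hΔt : 0 < Δt) (hΔx : 0 < Δx)
    (H : ℝ → ℝ → ℝ → ℝ → ℝ)
    (hH : ContDiff ℝ (⊤ : ℕ∞) (fun p : ℝ × ℝ × ℝ × ℝ => H p.1 p.2.1 p.2.2.1 p.2.2.2))
    (φ1 φ0 π1 π0 : ℕ → ℕ → ℝ) :
    ((∀ a < N, ∀ b, 1 ≤ b → b ≤ M - 1 →
        deriv (fun t => Sd N M Δt Δx H (upd2 φ1 a b t) φ0 π1 π0) (φ1 a b) = 0) ∧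
     (∀ a, 1 ≤ a → a ≤ N - 1 → ∀ b < M,
        deriv (fun t => Sd N M Δt Δx H φ1 (upd2 φ0 a b t) π1 π0) (φ0 a b) = 0) ∧
     (∀ a < N, ∀ b, 1 ≤ b → b ≤ M - 1 →
        deriv (fun t => Sd N M Δt Δx H φ1 φ0 (upd2 π1 a b t) π0) (π1 a b) = 0) ∧
     (∀ a, 1 ≤ a → a ≤ N - 1 → ∀ b < M,
        deriv (fun t => Sd N M Δt Δx H φ1 φ0 π1 (upd2 π0 a b t)) (π0 a b) = 0))
    ↔
    ((∀ a < N, ∀ b, 1 ≤ b → b ≤ M - 1 →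
        Δt * π1 a b
          = deriv (fun t => H t (φ0 a b) (π1 a (b + 1)) (π0 (a + 1) b)) (φ1 a b)) ∧
     (∀ a, 1 ≤ a → a ≤ N - 1 → ∀ b < M,
        Δx * π0 a b
          = deriv (fun t => H (φ1 a b) t (π1 a (b + 1)) (π0 (a + 1) b)) (φ0 a b)) ∧
     (∀ a < N, ∀ b, b + 2 ≤ M →
        Δt * φ1 a (b + 1)
          = deriv (fun t => H (φ1 a b) (φ0 a b) t (π0 (a + 1) b)) (π1 a (b + 1))) ∧
     (∀ a, a + 2 ≤ N → ∀ b < M,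
        Δx * φ0 (a + 1) b
          = deriv (fun t => H (φ1 a b) (φ0 a b) (π1 a (b + 1)) t) (π0 (a + 1) b))) := by
  have hdiff : Differentiable ℝ (fun p : ℝ × ℝ × ℝ × ℝ => H p.1 p.2.1 p.2.2.1 p.2.2.2) :=
    hH.differentiable (by simp)
  have hD1 : ∀ c1 c2 c3 : ℝ, Differentiable ℝ (fun t : ℝ => H t c1 c2 c3) := fun c1 c2 c3 =>
    hdiff.comp (differentiable_id.prodMk (differentiable_const (c1, c2, c3)))
  have hD2 : ∀ c1 c2 c3 : ℝ, Differentiable ℝ (fun t : ℝ => H c1 t c2 c3) := fun c1 c2 c3 =>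
    hdiff.comp ((differentiable_const c1).prodMk
      (differentiable_id.prodMk (differentiable_const (c2, c3))))
  have hD3 : ∀ c1 c2 c3 : ℝ, Differentiable ℝ (fun t : ℝ => H c1 c2 t c3) := fun c1 c2 c3 =>
    hdiff.comp ((differentiable_const c1).prodMk ((differentiable_const c2).prodMk
      (differentiable_id.prodMk (differentiable_const c3))))
  have hD4 : ∀ c1 c2 c3 : ℝ, Differentiable ℝ (fun t : ℝ => H c1 c2 c3 t) := fun c1 c2 c3 =>
    hdiff.comp ((differentiable_const c1).prodMk ((differentiable_const c2).prodMk
      ((differentiable_const c3).prodMk differentiable_id)))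
  have d1 : ∀ a b, a < N → 1 ≤ b → b ≤ M - 1 → ∀ x,
      deriv (fun t => Sd N M Δt Δx H (upd2 φ1 a b t) φ0 π1 π0) x
        = -(Δt * π1 a b) + deriv (fun t => H t (φ0 a b) (π1 a (b + 1)) (π0 (a + 1) b)) x := by
    intro a b ha hb1 hb2 x
    rw [funext fun t => key1 N M Δt Δx H φ1 φ0 π1 π0 a b ha hb1 hb2 t]
    exact derivEq _ _ _ _ (hD1 _ _ _)
  have d2 : ∀ a b, 1 ≤ a → a ≤ N - 1 → b < M → ∀ x,
      deriv (fun t => Sd N M Δt Δx H φ1 (upd2 φ0 a b t) π1 π0) x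
        = -(Δx * π0 a b) + deriv (fun t => H (φ1 a b) t (π1 a (b + 1)) (π0 (a + 1) b)) x := by
    intro a b ha1 ha2 hb x
    rw [funext fun t => key2 N M Δt Δx H φ1 φ0 π1 π0 a b ha1 ha2 hb t]
    exact derivEq _ _ _ _ (hD2 _ _ _)
  have d3 : ∀ a b, a < N → 1 ≤ b → b ≤ M - 1 → ∀ x,
      deriv (fun t => Sd N M Δt Δx H φ1 φ0 (upd2 π1 a b t) π0) x
        = -(Δt * φ1 a b)
          + deriv (fun t => H (φ1 a (b - 1)) (φ0 a (b - 1)) t (π0 (a + 1) (b - 1))) x := by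
    intro a b ha hb1 hb2 x
    rw [funext fun t => key3 N M Δt Δx H φ1 φ0 π1 π0 a b ha hb1 hb2 t]
    exact derivEq _ _ _ _ (hD3 _ _ _)
  have d4 : ∀ a b, 1 ≤ a → a ≤ N - 1 → b < M → ∀ x,
      deriv (fun t => Sd N M Δt Δx H φ1 φ0 π1 (upd2 π0 a b t)) x
        = -(Δx * φ0 a b)
          + deriv (fun t => H (φ1 (a - 1) b) (φ0 (a - 1) b) (π1 (a - 1) (b + 1)) t) x := by
    intro a b ha1 ha2 hb x
    rw [funext fun t => key4 N M Δt Δx H φ1 φ0 π1 π0 a b ha1 ha2 hb t]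
    exact derivEq _ _ _ _ (hD4 _ _ _)
  constructor
  · rintro ⟨h1, h2, h3, h4⟩
    refine ⟨?_, ?_, ?_, ?_⟩
    · intro a ha b hb1 hb2
      have := h1 a ha b hb1 hb2
      rw [d1 a b ha hb1 hb2] at this
      linarith
    · intro a ha1 ha2 b hb
      have := h2 a ha1 ha2 b hb
      rw [d2 a b ha1 ha2 hb] at this
      linarith
    · intro a ha b hb
      have := h3 a ha (b + 1) (by omega) (by omega)
      rw [d3 a (b + 1) ha (by omega) (by omega)] at this
      simp only [Nat.add_sub_cancel] at this
      linarith
    · intro a ha b hb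
      have := h4 (a + 1) (by omega) (by omega) b hb
      rw [d4 (a + 1) b (by omega) (by omega) hb] at this
      simp only [Nat.add_sub_cancel] at this
      linarith
  · rintro ⟨h1, h2, h3, h4⟩
    refine ⟨?_, ?_, ?_, ?_⟩
    · intro a ha b hb1 hb2
      have := h1 a ha b hb1 hb2
      rw [d1 a b ha hb1 hb2]
      linarith
    · intro a ha1 ha2 b hb
      have := h2 a ha1 ha2 b hb
      rw [d2 a b ha1 ha2 hb]
      linarith
    · intro a ha b hb1 hb2
      have := h3 a ha (b - 1) (by omega)
      rw [show b - 1 + 1 = b from by omega] at this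
      rw [d3 a b ha hb1 hb2]
      linarith
    · intro a ha1 ha2 b hb
      have := h4 (a - 1) (by omega) b hb
      rw [show a - 1 + 1 = a from by omega] at this
      rw [d4 a b ha1 ha2 hb]
      linarith
end
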